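/- arXiv:math/0301332 — 3 statements merged into one kernel-verified Lean document; each statement's English description precedes it below -/
import Mathlib

section
/- (Theorem, part 3: involution of invariant functions) Suppose g₊ and g₋ are Lie subalgebras of g with g = g₊ ⊕ g₋ as vector spaces. Let U ∈ g₊^⊥ and let V, W ∈ g satisfy ad^t_V U = 0 and ad^t_W U = 0, with decompositions V = V₊ + V₋, W = W₊ + W₋ (V±, W± ∈ g±). Then B(U, [V₋, W₋]) = 0. (Taking V = ∇f₁(U), W = ∇f₂(U) for τ-invariant functions f₁, f₂, this says that the Poisson bracket {H₁, H₂} of their restrictions to a G₋-orbit in g₊^⊥ vanishes.) -/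
/-- Theorem, part 3 (involution of invariant functions): for `U ∈ g₊^⊥`,
`V = V₊ + V₋`, `W = W₊ + W₋` with `ad^t_V U = 0 = ad^t_W U`, one has
`B(U, [V₋, W₋]) = 0`. -/
theorem stmt_11 (g : Type*) [LieRing g] [LieAlgebra ℝ g] [FiniteDimensional ℝ g]
    (B : LinearMap.BilinForm ℝ g) (hB : B.Nondegenerate) (hsymm : B.IsSymm)
    (adt : g → g →ₗ[ℝ] g)
    (hadt : ∀ X Y Z : g, B (adt X Y) Z = B Y ⁅X, Z⁆)
    (gp gm : LieSubalgebra ℝ g) (h : IsCompl gp.toSubmodule gm.toSubmodule) :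
    ∀ U ∈ B.orthogonal gp.toSubmodule, ∀ V W Vp Vm Wp Wm : g,
      adt V U = 0 → adt W U = 0 →
      Vp ∈ gp → Vm ∈ gm → V = Vp + Vm →
      Wp ∈ gp → Wm ∈ gm → W = Wp + Wm →
        B U ⁅Vm, Wm⁆ = 0 := by
  intro U hU V W Vp Vm Wp Wm hV hW hVp hVm hVd hWp hWm hWd
  have hVz : ∀ Z : g, B U ⁅V, Z⁆ = 0 := fun Z => by
    rw [← hadt, hV]; simp
  have hWz : ∀ Z : g, B U ⁅W, Z⁆ = 0 := fun Z => by
    rw [← hadt, hW]; simp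
  have hVm' : Vm = V - Vp := by rw [hVd]; abel
  have hWm' : Wm = W - Wp := by rw [hWd]; abel
  have hUp : ∀ X ∈ gp, B U X = 0 := fun X hX => by
    rw [hsymm.eq]; exact hU X hX
  have key : B U ⁅Vm, Wm⁆ = B U ⁅V, Wm⁆ - B U ⁅Vp, W⁆ + B U ⁅Vp, Wp⁆ := by
    rw [hVm', hWm']
    simp only [sub_lie, lie_sub, map_sub]
    abel
  rw [key, hVz]
  have : B U ⁅Vp, W⁆ = 0 := by
    rw [← lie_skew, map_neg, hWz, neg_zero]
  rw [this, hUp ⁅Vp, Wp⁆ (gp.lie_mem hVp hWp)]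
  abel
end

section
/- The 5-dimensional 4-step nilpotent Lie algebra g with basis e₁,…,e₅ and nonzero brackets [e₁,e₂] = e₃, [e₁,e₃] = e₄, [e₅,e₁] = e₂, [e₅,e₂] = e₃, [e₅,e₃] = e₄ does not admit an ad-invariant metric: there is no nondegenerate symmetric bilinear form B on g satisfying B([X,Y], Z) + B(Y, [X,Z]) = 0 for all X, Y, Z ∈ g. -/
/-- The Lie bracket of the 5-dimensional 4-step nilpotent Lie algebra with
`[e₁,e₂] = e₃`, `[e₁,e₃] = e₄`, `[e₅,e₁] = e₂`, `[e₅,e₂] = e₃`, `[e₅,e₃] = e₄`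
(all other basis brackets zero), in coordinates. -/
def br5 (X Y : Fin 5 → ℝ) : Fin 5 → ℝ :=
  ![0,
    X 4 * Y 0 - X 0 * Y 4,
    X 0 * Y 1 - X 1 * Y 0 + X 4 * Y 1 - X 1 * Y 4,
    X 0 * Y 2 - X 2 * Y 0 + X 4 * Y 2 - X 2 * Y 4,
    0]

/-- This Lie algebra admits no ad-invariant metric: there is no nondegenerate symmetric
bilinear form `B` with `B([X,Y],Z) = -B(Y,[X,Z])` for all `X, Y, Z`. -/
theorem stmt_12 :
    ¬ ∃ B : LinearMap.BilinForm ℝ (Fin 5 → ℝ),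
      B.Nondegenerate ∧ B.IsSymm ∧
      ∀ X Y Z : Fin 5 → ℝ, B (br5 X Y) Z = -(B Y (br5 X Z)) := by
  rintro ⟨B, hnd, _hsym, hinv⟩
  set e0 : Fin 5 → ℝ := ![1,0,0,0,0] with he0
  set e1 : Fin 5 → ℝ := ![0,1,0,0,0] with he1
  set e2 : Fin 5 → ℝ := ![0,0,1,0,0] with he2
  set e3 : Fin 5 → ℝ := ![0,0,0,1,0] with he3
  set e4 : Fin 5 → ℝ := ![0,0,0,0,1] with he4
  have b02 : br5 e0 e2 = e3 := by
    funext i; fin_cases i <;> simp [br5, he0, he2, he3]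
  have b00 : br5 e0 e0 = 0 := by
    funext i; fin_cases i <;> simp [br5, he0]
  have b03 : br5 e0 e3 = 0 := by
    funext i; fin_cases i <;> simp [br5, he0, he3]
  have b01 : br5 e0 e1 = e2 := by
    funext i; fin_cases i <;> simp [br5, he0, he1, he2]
  have b04 : br5 e0 e4 = -e1 := by
    funext i; fin_cases i <;> simp [br5, he0, he1, he4]
  have b42 : br5 e4 e2 = e3 := by
    funext i; fin_cases i <;> simp [br5, he4, he2, he3]
  have b44 : br5 e4 e4 = 0 := by
    funext i; fin_cases i <;> simp [br5, he4]
  -- B(e3, e0) = 0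
  have h30 : B e3 e0 = 0 := by
    have := hinv e0 e2 e0
    rw [b02, b00] at this; simpa using this
  -- B(e3, e3) = 0
  have h33 : B e3 e3 = 0 := by
    have := hinv e0 e2 e3
    rw [b02, b03] at this; simpa using this
  -- from br5 e0 e3 = 0 : B e3 (br5 e0 Z) = 0
  have haux : ∀ Z, B e3 (br5 e0 Z) = 0 := by
    intro Z
    have := hinv e0 e3 Z
    rw [b03] at this
    simpa using this.symm
  have h32 : B e3 e2 = 0 := by have := haux e1; rwa [b01] at this
  have h31 : B e3 e1 = 0 := by
    have := haux e4; rw [b04] at this; simpa using this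
  have h34 : B e3 e4 = 0 := by
    have := hinv e4 e2 e4
    rw [b42, b44] at this; simpa using this
  have key : ∀ n, B e3 n = 0 := by
    intro n
    have hrep : n = n 0 • e0 + n 1 • e1 + n 2 • e2 + n 3 • e3 + n 4 • e4 := by
      funext i; fin_cases i <;> simp [he0, he1, he2, he3, he4]
    rw [hrep]
    simp [map_add, map_smul, h30, h31, h32, h33, h34]
  have h0 := hnd.1 e3 key
  have : (1 : ℝ) = 0 := by
    have := congrFun h0 3
    simpa [he3] using this
  norm_num at this
end

section
/- Let x₁, x₂, x₃ : ℝ → ℝ be differentiable functions and define the 3×3 matrix-valued curves M(t) with rows ((0, -x₃(t), 0), (x₃(t), 0, 0), (0, 0, 0)) and L(t) with rows ((0, -x₃(t), x₁(t)), (x₃(t), 0, x₂(t)), (0, 0, 0)). Then the Lax equation L'(t) = M(t)L(t) - L(t)M(t) holds for all t if and only if x₁' = -x₃x₂, x₂' = x₃x₁ and x₃' = 0; i.e., the Lax pair (L, M) is a matricial realization of the Hamiltonian system on the coadjoint orbit of the oscillator Lie algebra for the Hamiltonian H(x) = ½(x₁² + x₂²). -/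
/-- Matricial (Lax pair) realization of the Hamiltonian system on the coadjoint orbit
of the oscillator Lie algebra for `H(x) = ½(x₁² + x₂²)`: with
`M(t) = !![0, -x₃, 0; x₃, 0, 0; 0, 0, 0]` and `L(t) = !![0, -x₃, x₁; x₃, 0, x₂; 0, 0, 0]`,
the entrywise Lax equation `L' = ML - LM` holds for all `t` if and only if
`x₁' = -x₃x₂`, `x₂' = x₃x₁`, `x₃' = 0`. -/
theorem stmt_19 (x₁ x₂ x₃ : ℝ → ℝ)
    (hx₁ : Differentiable ℝ x₁) (hx₂ : Differentiable ℝ x₂) (hx₃ : Differentiable ℝ x₃)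
    (M L : ℝ → Matrix (Fin 3) (Fin 3) ℝ)
    (hM : ∀ t, M t = !![0, -x₃ t, 0; x₃ t, 0, 0; 0, 0, 0])
    (hL : ∀ t, L t = !![0, -x₃ t, x₁ t; x₃ t, 0, x₂ t; 0, 0, 0]) :
    (∀ t, ∀ i j : Fin 3,
        HasDerivAt (fun s => L s i j) ((M t * L t - L t * M t) i j) t) ↔
    (∀ t, HasDerivAt x₁ (-(x₃ t * x₂ t)) t ∧
          HasDerivAt x₂ (x₃ t * x₁ t) t ∧
          HasDerivAt x₃ 0 t) := by
  have hRHS : ∀ t, M t * L t - L t * M t =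
      !![0, 0, -(x₃ t * x₂ t); 0, 0, x₃ t * x₁ t; 0, 0, 0] := by
    intro t
    rw [hM, hL]
    ext i j
    fin_cases i <;> fin_cases j <;>
      simp [Matrix.mul_apply, Fin.sum_univ_three, Matrix.vecHead, Matrix.vecTail] <;> ring
  constructor
  · intro h t
    refine ⟨?_, ?_, ?_⟩
    · have := h t 0 2
      rw [hRHS t] at this
      simpa [funext fun s => hL s] using this
    · have := h t 1 2
      rw [hRHS t] at this
      simpa [funext fun s => hL s] using this
    · have := h t 1 0
      rw [hRHS t] at this
      simpa [funext fun s => hL s] using this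
  · intro h t i j
    rw [hRHS t]
    have h1 := (h t).1
    have h2 := (h t).2.1
    have h3 := (h t).2.2
    fin_cases i <;> fin_cases j <;>
      simp only [funext fun s => hL s] <;>
      simp [Matrix.cons_val_zero, Matrix.cons_val_one] <;>
      first
        | exact hasDerivAt_const _ _
        | exact h1
        | exact h2
        | exact h3
        | exact h3.neg.congr_deriv neg_zero
end
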